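/- The survival function of the modified exponential distribution is Ḡ(t) = e^{-αt} - 2√π Φ(-√(2αt)) (αt)^{1/2}, i.e., the derivative of 1 - Ḡ(t) equals g(t) = α√π Φ(-√(2αt))/√(αt) for t > 0, and Ḡ(0)=1, Ḡ(t) → 0 as t → ∞. -/

import Mathlib

/-! With `x = √(2αt)` one has `Ḡ(t) = e^{-x²/2} - √(2π) x Φ(-x)`, which is `√(2π)` times the
normal loss function `L(x) = φ(x) - x Φ(-x)`. Since `φ' = -x φ`, the two `x φ(x)` terms cancel
in `L'`, leaving `L' = -Φ(-x)`; the chain rule through `x = √(2αt)` then produces `g`. Mills'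
inequality `x Φ(-x) ≤ φ(x)` traps `L` between `0` and `φ(x) → 0`, so `Ḡ(t) → 0`. -/

open MeasureTheory Set Real Filter

/-- The standard normal distribution function Φ. -/
noncomputable def Phi (z : ℝ) : ℝ :=
  (Real.sqrt (2 * Real.pi))⁻¹ * ∫ y in Set.Iic z, Real.exp (-y ^ 2 / 2)

/-- The survival function of the modified exponential distribution. -/
noncomputable def modExpSurv (α t : ℝ) : ℝ :=
  Real.exp (-(α * t)) - 2 * Real.sqrt Real.pi * Phi (-Real.sqrt (2 * α * t)) * Real.sqrt (α * t)

open Topology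

lemma hasDerivAt_integral_Iic {f : ℝ → ℝ} (hf : Integrable f) (hc : Continuous f) (x : ℝ) :
    HasDerivAt (fun u => ∫ y in Iic u, f y) (f x) x := by
  have hsplit : (fun u => ∫ y in Iic u, f y) =
      fun u => (∫ y in Iic 0, f y) + ∫ y in (0 : ℝ)..u, f y := by
    funext u
    rw [← intervalIntegral.integral_Iic_sub_Iic hf.integrableOn hf.integrableOn]
    ring
  rw [hsplit]
  exact (intervalIntegral.integral_hasDerivAt_right hf.intervalIntegrable
    (hc.stronglyMeasurableAtFilter _ _) hc.continuousAt).const_add _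

lemma integrable_exp_neg_sq_div_two : Integrable fun y : ℝ => exp (-y ^ 2 / 2) := by
  simpa [div_eq_inv_mul, mul_comm] using integrable_exp_neg_mul_sq (b := 1 / 2) (by norm_num)

lemma hasDerivAt_exp_neg_sq_div_two (x : ℝ) :
    HasDerivAt (fun s => exp (-s ^ 2 / 2)) (-x * exp (-x ^ 2 / 2)) x := by
  have h : HasDerivAt (fun s : ℝ => -s ^ 2 / 2) (-x) x :=
    ((hasDerivAt_pow 2 x).neg.div_const 2).congr_deriv (by ring)
  exact h.exp.congr_deriv (by ring)

lemma tendsto_exp_neg_sq_div_two_atTop : Tendsto (fun x : ℝ => exp (-x ^ 2 / 2)) atTop (𝓝 0) :=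
  tendsto_exp_atBot.comp <|
    (tendsto_neg_atBot_iff.2 (tendsto_pow_atTop two_ne_zero)).atBot_div_const two_pos

lemma hasDerivAt_Phi (z : ℝ) :
    HasDerivAt Phi ((√(2 * π))⁻¹ * exp (-z ^ 2 / 2)) z :=
  (hasDerivAt_integral_Iic integrable_exp_neg_sq_div_two (by fun_prop) z).const_mul _

lemma Phi_nonneg (z : ℝ) : 0 ≤ Phi z :=
  mul_nonneg (inv_nonneg.2 (sqrt_nonneg _))
    (setIntegral_nonneg measurableSet_Iic fun _ _ => (exp_pos _).le)

/-- Mills' inequality `x Φ(-x) ≤ φ(x)`: on `(x, ∞)`, `x e^{-y²/2} ≤ y e^{-y²/2}`, and the latter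
has the primitive `-e^{-y²/2}`. -/
lemma mul_Phi_neg_le (x : ℝ) :
    x * Phi (-x) ≤ (√(2 * π))⁻¹ * exp (-x ^ 2 / 2) := by
  have hreflect : (∫ y in Iic (-x), exp (-y ^ 2 / 2)) = ∫ y in Ioi x, exp (-y ^ 2 / 2) := by
    have := integral_comp_neg_Iic (-x) fun y => exp (-y ^ 2 / 2)
    simp only [neg_neg, neg_sq] at this
    exact this
  have hderiv : ∀ y ∈ Ici x, HasDerivAt (fun s => -exp (-s ^ 2 / 2)) (y * exp (-y ^ 2 / 2)) y :=
    fun y _ => (hasDerivAt_exp_neg_sq_div_two y).neg.congr_deriv (by ring)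
  have hint : IntegrableOn (fun y => y * exp (-y ^ 2 / 2)) (Ioi x) := by
    simpa [div_eq_inv_mul, mul_comm] using
      (integrable_mul_exp_neg_mul_sq (b := 1 / 2) (by norm_num)).integrableOn (s := Ioi x)
  have hlim : Tendsto (fun s : ℝ => -exp (-s ^ 2 / 2)) atTop (𝓝 0) := by
    simpa using tendsto_exp_neg_sq_div_two_atTop.neg
  have htail : x * ∫ y in Ioi x, exp (-y ^ 2 / 2) ≤ exp (-x ^ 2 / 2) :=
    calc x * ∫ y in Ioi x, exp (-y ^ 2 / 2)
        = ∫ y in Ioi x, x * exp (-y ^ 2 / 2) := (integral_const_mul _ _).symm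
      _ ≤ ∫ y in Ioi x, y * exp (-y ^ 2 / 2) :=
        setIntegral_mono_on (integrable_exp_neg_sq_div_two.integrableOn.const_mul _) hint
          measurableSet_Ioi fun y hy => by gcongr; exact (mem_Ioi.1 hy).le
      _ = exp (-x ^ 2 / 2) := by
        rw [integral_Ioi_of_hasDerivAt_of_tendsto' hderiv hint hlim]; ring
  rw [Phi, hreflect, mul_left_comm]
  gcongr

/-- `√(2π)` times the standard normal loss function `φ(x) - x Φ(-x)`. -/
noncomputable def scaledNormalLoss (x : ℝ) : ℝ :=
  exp (-x ^ 2 / 2) - √(2 * π) * x * Phi (-x)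

lemma hasDerivAt_scaledNormalLoss (x : ℝ) :
    HasDerivAt scaledNormalLoss (-(√(2 * π) * Phi (-x))) x := by
  have hPhi : HasDerivAt (fun s => Phi (-s)) (-((√(2 * π))⁻¹ * exp (-x ^ 2 / 2))) x := by
    have := (hasDerivAt_Phi (-x)).comp x (hasDerivAt_neg x)
    rw [neg_sq] at this
    exact this.congr_deriv (by ring)
  have hc : √(2 * π) ≠ 0 := by positivity
  refine ((hasDerivAt_exp_neg_sq_div_two x).sub
    (((hasDerivAt_id' x).const_mul (√(2 * π))).mul hPhi)).congr_deriv ?_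
  field_simp
  ring

lemma tendsto_scaledNormalLoss_atTop : Tendsto scaledNormalLoss atTop (𝓝 0) := by
  refine squeeze_zero' ?_ ?_ tendsto_exp_neg_sq_div_two_atTop
  · refine Eventually.of_forall fun x => ?_
    have hmills := mul_Phi_neg_le x
    rw [le_inv_mul_iff₀ (by positivity)] at hmills
    rw [scaledNormalLoss]; linarith
  · filter_upwards [eventually_ge_atTop 0] with x hx
    have := mul_nonneg (mul_nonneg (sqrt_nonneg (2 * π)) hx) (Phi_nonneg (-x))
    rw [scaledNormalLoss]; linarith

lemma modExpSurv_eq_scaledNormalLoss {α t : ℝ} (hαt : 0 ≤ α * t) :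
    modExpSurv α t = scaledNormalLoss √(2 * α * t) := by
  have h2αt : 0 ≤ 2 * α * t := by linarith
  have hroot : 2 * √π * √(α * t) = √(2 * π) * √(2 * α * t) := by
    rw [← sqrt_mul (by positivity : (0:ℝ) ≤ 2 * π),
      show 2 * π * (2 * α * t) = 2 ^ 2 * (π * (α * t)) by ring,
      sqrt_mul (by positivity : (0:ℝ) ≤ 2 ^ 2), sqrt_sq zero_le_two, sqrt_mul pi_pos.le, mul_assoc]
  rw [modExpSurv, scaledNormalLoss, sq_sqrt h2αt, mul_right_comm _ (Phi _), hroot]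
  ring_nf

lemma hasDerivAt_modExpSurv {α t : ℝ} (hα : 0 < α) (ht : 0 < t) :
    HasDerivAt (modExpSurv α) (-(α * √π * Phi (-√(2 * α * t)) / √(α * t))) t := by
  have hαt : 0 < α * t := mul_pos hα ht
  have hroot : HasDerivAt (fun s => √(2 * α * s)) (2 * α / (2 * √(2 * α * t))) t :=
    ((hasDerivAt_id t).const_mul (2 * α)).sqrt (by positivity) |>.congr_deriv (by simp)
  have hloc : (fun s => scaledNormalLoss √(2 * α * s)) =ᶠ[𝓝 t] modExpSurv α := by
    filter_upwards [lt_mem_nhds ht] with s hs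
    exact (modExpSurv_eq_scaledNormalLoss (mul_pos hα hs).le).symm
  refine ((hasDerivAt_scaledNormalLoss _).comp t hroot).congr_of_eventuallyEq hloc.symm
    |>.congr_deriv ?_
  rw [mul_assoc 2 α t, sqrt_mul zero_le_two, sqrt_mul zero_le_two]
  have : √(α * t) ≠ 0 := (sqrt_pos.2 hαt).ne'
  field_simp

/-- the derivative of 1 - Ḡ(t) is g(t) = α√π Φ(-√(2αt))/√(αt) for
t > 0, with Ḡ(0) = 1 and Ḡ(t) → 0 as t → ∞. -/
theorem modified_exponential_survival (α : ℝ) (hα : 0 < α) :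
    (∀ t : ℝ, 0 < t →
      HasDerivAt (fun s => 1 - modExpSurv α s)
        (α * Real.sqrt Real.pi * Phi (-Real.sqrt (2 * α * t)) / Real.sqrt (α * t)) t) ∧
    modExpSurv α 0 = 1 ∧
    Tendsto (fun t => modExpSurv α t) atTop (nhds 0) := by
  refine ⟨fun t ht => ?_, by simp [modExpSurv], ?_⟩
  · simpa using (hasDerivAt_modExpSurv hα ht).const_sub 1
  · have hroot : Tendsto (fun t => √(2 * α * t)) atTop atTop :=
      tendsto_sqrt_atTop.comp (tendsto_id.const_mul_atTop (by positivity))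
    refine (tendsto_scaledNormalLoss_atTop.comp hroot).congr' ?_
    filter_upwards [eventually_ge_atTop 0] with t ht
    exact (modExpSurv_eq_scaledNormalLoss (mul_nonneg hα.le ht)).symm
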